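/- Let K be a constant real n×m matrix and let the smooth function φ : ℝ³ → (m×n real matrices) satisfy the pKP_K equation. Then φ_R := φ K (an m×m matrix valued function) satisfies the pKP_{I_m} equation (the ordinary m×m matrix potential KP equation, i.e. pKP_K with K the m×m identity matrix), and φ_L := K φ (an n×n matrix valued function) satisfies the pKP_{I_n} equation. -/

import Mathlib

open Matrix

/-- Partial derivative with respect to the first variable `x` of a matrix-valued
function of `(x, y, t)`, taken entrywise. -/
noncomputable def Dx {m n : ℕ} (φ : ℝ → ℝ → ℝ → Matrix (Fin m) (Fin n) ℝ) :
    ℝ → ℝ → ℝ → Matrix (Fin m) (Fin n) ℝ :=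
  fun x y t => Matrix.of fun i j => deriv (fun s => φ s y t i j) x

/-- Partial derivative with respect to the second variable `y`. -/
noncomputable def Dy {m n : ℕ} (φ : ℝ → ℝ → ℝ → Matrix (Fin m) (Fin n) ℝ) :
    ℝ → ℝ → ℝ → Matrix (Fin m) (Fin n) ℝ :=
  fun x y t => Matrix.of fun i j => deriv (fun s => φ x s t i j) y

/-- Partial derivative with respect to the third variable `t`. -/
noncomputable def Dt {m n : ℕ} (φ : ℝ → ℝ → ℝ → Matrix (Fin m) (Fin n) ℝ) :
    ℝ → ℝ → ℝ → Matrix (Fin m) (Fin n) ℝ :=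
  fun x y t => Matrix.of fun i j => deriv (fun s => φ x y s i j) t

/-- Smoothness (entrywise `C^∞`) of a matrix-valued function on ℝ³. -/
def SmoothMat {m n : ℕ} (φ : ℝ → ℝ → ℝ → Matrix (Fin m) (Fin n) ℝ) : Prop :=
  ∀ i j, ContDiff ℝ (⊤ : ℕ∞) fun pt : ℝ × ℝ × ℝ => φ pt.1 pt.2.1 pt.2.2 i j

/-- The pKP_K equation:
`4 φ_{xt} − φ_{xxxx} − 3 φ_{yy} − 6 (φ_x K φ_x)_x + 6 (φ_x K φ_y − φ_y K φ_x) = 0`. -/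
def pKP {m n : ℕ} (K : Matrix (Fin n) (Fin m) ℝ)
    (φ : ℝ → ℝ → ℝ → Matrix (Fin m) (Fin n) ℝ) : Prop :=
  ∀ x y t : ℝ,
    (4 : ℝ) • Dx (Dt φ) x y t - Dx (Dx (Dx (Dx φ))) x y t - (3 : ℝ) • Dy (Dy φ) x y t
      - (6 : ℝ) • Dx (fun x y t => Dx φ x y t * K * Dx φ x y t) x y t
      + (6 : ℝ) • (Dx φ x y t * K * Dy φ x y t - Dy φ x y t * K * Dx φ x y t) = 0

/-- Derivative of a smooth function along a differentiable curve. -/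
lemma entryDeriv {f : ℝ × ℝ × ℝ → ℝ} (hf : ContDiff ℝ (⊤ : ℕ∞) f) {g : ℝ → ℝ × ℝ × ℝ}
    {v : ℝ × ℝ × ℝ} {x : ℝ} (hg : HasDerivAt g v x) :
    HasDerivAt (fun s => f (g s)) (fderiv ℝ f (g x) v) x :=
  ((hf.differentiable (by simp)).differentiableAt.hasFDerivAt).comp_hasDerivAt x hg

lemma curve_x (y t x : ℝ) :
    HasDerivAt (fun s : ℝ => (s, y, t)) (((1:ℝ), (0:ℝ), (0:ℝ)) : ℝ × ℝ × ℝ) x :=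
  (hasDerivAt_id x).prodMk (hasDerivAt_const x (y, t))

lemma curve_y (x t y : ℝ) :
    HasDerivAt (fun s : ℝ => (x, s, t)) (((0:ℝ), (1:ℝ), (0:ℝ)) : ℝ × ℝ × ℝ) y :=
  (hasDerivAt_const y x).prodMk ((hasDerivAt_id y).prodMk (hasDerivAt_const y t))

lemma curve_t (x y t : ℝ) :
    HasDerivAt (fun s : ℝ => (x, y, s)) (((0:ℝ), (0:ℝ), (1:ℝ)) : ℝ × ℝ × ℝ) t :=
  (hasDerivAt_const t x).prodMk ((hasDerivAt_const t y).prodMk (hasDerivAt_id t))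

section Lemmas

variable {m n p : ℕ}

lemma diffAt_x {φ : ℝ → ℝ → ℝ → Matrix (Fin m) (Fin n) ℝ} (h : SmoothMat φ)
    (i : Fin m) (j : Fin n) (x y t : ℝ) :
    DifferentiableAt ℝ (fun s => φ s y t i j) x :=
  (entryDeriv (h i j) (curve_x y t x)).differentiableAt

lemma diffAt_y {φ : ℝ → ℝ → ℝ → Matrix (Fin m) (Fin n) ℝ} (h : SmoothMat φ)
    (i : Fin m) (j : Fin n) (x y t : ℝ) :
    DifferentiableAt ℝ (fun s => φ x s t i j) y :=
  (entryDeriv (h i j) (curve_y x t y)).differentiableAt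

lemma diffAt_t {φ : ℝ → ℝ → ℝ → Matrix (Fin m) (Fin n) ℝ} (h : SmoothMat φ)
    (i : Fin m) (j : Fin n) (x y t : ℝ) :
    DifferentiableAt ℝ (fun s => φ x y s i j) t :=
  (entryDeriv (h i j) (curve_t x y t)).differentiableAt

lemma smooth_Dx {φ : ℝ → ℝ → ℝ → Matrix (Fin m) (Fin n) ℝ} (h : SmoothMat φ) :
    SmoothMat (Dx φ) := by
  intro i j
  have key : (fun pt : ℝ × ℝ × ℝ => Dx φ pt.1 pt.2.1 pt.2.2 i j)
      = fun pt : ℝ × ℝ × ℝ =>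
        fderiv ℝ (fun q : ℝ × ℝ × ℝ => φ q.1 q.2.1 q.2.2 i j) pt ((1:ℝ), (0:ℝ), (0:ℝ)) := by
    funext pt
    simp only [Dx, Matrix.of_apply]
    exact (entryDeriv (h i j) (curve_x pt.2.1 pt.2.2 pt.1)).deriv
  rw [key]
  exact ((h i j).fderiv_right (by simp)).clm_apply contDiff_const

lemma smooth_Dy {φ : ℝ → ℝ → ℝ → Matrix (Fin m) (Fin n) ℝ} (h : SmoothMat φ) :
    SmoothMat (Dy φ) := by
  intro i j
  have key : (fun pt : ℝ × ℝ × ℝ => Dy φ pt.1 pt.2.1 pt.2.2 i j)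
      = fun pt : ℝ × ℝ × ℝ =>
        fderiv ℝ (fun q : ℝ × ℝ × ℝ => φ q.1 q.2.1 q.2.2 i j) pt ((0:ℝ), (1:ℝ), (0:ℝ)) := by
    funext pt
    simp only [Dy, Matrix.of_apply]
    exact (entryDeriv (h i j) (curve_y pt.1 pt.2.2 pt.2.1)).deriv
  rw [key]
  exact ((h i j).fderiv_right (by simp)).clm_apply contDiff_const

lemma smooth_Dt {φ : ℝ → ℝ → ℝ → Matrix (Fin m) (Fin n) ℝ} (h : SmoothMat φ) :
    SmoothMat (Dt φ) := by
  intro i j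
  have key : (fun pt : ℝ × ℝ × ℝ => Dt φ pt.1 pt.2.1 pt.2.2 i j)
      = fun pt : ℝ × ℝ × ℝ =>
        fderiv ℝ (fun q : ℝ × ℝ × ℝ => φ q.1 q.2.1 q.2.2 i j) pt ((0:ℝ), (0:ℝ), (1:ℝ)) := by
    funext pt
    simp only [Dt, Matrix.of_apply]
    exact (entryDeriv (h i j) (curve_t pt.1 pt.2.1 pt.2.2)).deriv
  rw [key]
  exact ((h i j).fderiv_right (by simp)).clm_apply contDiff_const

lemma SmoothMat.mul {A : ℝ → ℝ → ℝ → Matrix (Fin m) (Fin n) ℝ}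
    {B : ℝ → ℝ → ℝ → Matrix (Fin n) (Fin p) ℝ}
    (hA : SmoothMat A) (hB : SmoothMat B) :
    SmoothMat fun x y t => A x y t * B x y t := by
  intro i j
  simp only [Matrix.mul_apply]
  exact ContDiff.sum fun k _ => (hA i k).mul (hB k j)

lemma smoothConstMat (K : Matrix (Fin m) (Fin n) ℝ) :
    SmoothMat (fun _ _ _ : ℝ => K) := fun i j => contDiff_const

lemma Dx_mul_const {φ : ℝ → ℝ → ℝ → Matrix (Fin m) (Fin n) ℝ} (h : SmoothMat φ)
    (K : Matrix (Fin n) (Fin p) ℝ) :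
    Dx (fun x y t => φ x y t * K) = fun x y t => Dx φ x y t * K := by
  funext x y t
  ext i j
  simp only [Dx, Matrix.of_apply, Matrix.mul_apply]
  rw [deriv_fun_sum fun k _ => (diffAt_x h i k x y t).mul_const _]
  exact Finset.sum_congr rfl fun k _ => deriv_mul_const (diffAt_x h i k x y t) _

lemma Dy_mul_const {φ : ℝ → ℝ → ℝ → Matrix (Fin m) (Fin n) ℝ} (h : SmoothMat φ)
    (K : Matrix (Fin n) (Fin p) ℝ) :
    Dy (fun x y t => φ x y t * K) = fun x y t => Dy φ x y t * K := by
  funext x y t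
  ext i j
  simp only [Dy, Matrix.of_apply, Matrix.mul_apply]
  rw [deriv_fun_sum fun k _ => (diffAt_y h i k x y t).mul_const _]
  exact Finset.sum_congr rfl fun k _ => deriv_mul_const (diffAt_y h i k x y t) _

lemma Dt_mul_const {φ : ℝ → ℝ → ℝ → Matrix (Fin m) (Fin n) ℝ} (h : SmoothMat φ)
    (K : Matrix (Fin n) (Fin p) ℝ) :
    Dt (fun x y t => φ x y t * K) = fun x y t => Dt φ x y t * K := by
  funext x y t
  ext i j
  simp only [Dt, Matrix.of_apply, Matrix.mul_apply]
  rw [deriv_fun_sum fun k _ => (diffAt_t h i k x y t).mul_const _]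
  exact Finset.sum_congr rfl fun k _ => deriv_mul_const (diffAt_t h i k x y t) _

lemma Dx_const_mul {φ : ℝ → ℝ → ℝ → Matrix (Fin m) (Fin n) ℝ} (h : SmoothMat φ)
    (K : Matrix (Fin p) (Fin m) ℝ) :
    Dx (fun x y t => K * φ x y t) = fun x y t => K * Dx φ x y t := by
  funext x y t
  ext i j
  simp only [Dx, Matrix.of_apply, Matrix.mul_apply]
  rw [deriv_fun_sum fun k _ => (diffAt_x h k j x y t).const_mul _]
  exact Finset.sum_congr rfl fun k _ => deriv_const_mul _ (diffAt_x h k j x y t)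

lemma Dy_const_mul {φ : ℝ → ℝ → ℝ → Matrix (Fin m) (Fin n) ℝ} (h : SmoothMat φ)
    (K : Matrix (Fin p) (Fin m) ℝ) :
    Dy (fun x y t => K * φ x y t) = fun x y t => K * Dy φ x y t := by
  funext x y t
  ext i j
  simp only [Dy, Matrix.of_apply, Matrix.mul_apply]
  rw [deriv_fun_sum fun k _ => (diffAt_y h k j x y t).const_mul _]
  exact Finset.sum_congr rfl fun k _ => deriv_const_mul _ (diffAt_y h k j x y t)

lemma Dt_const_mul {φ : ℝ → ℝ → ℝ → Matrix (Fin m) (Fin n) ℝ} (h : SmoothMat φ)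
    (K : Matrix (Fin p) (Fin m) ℝ) :
    Dt (fun x y t => K * φ x y t) = fun x y t => K * Dt φ x y t := by
  funext x y t
  ext i j
  simp only [Dt, Matrix.of_apply, Matrix.mul_apply]
  rw [deriv_fun_sum fun k _ => (diffAt_t h k j x y t).const_mul _]
  exact Finset.sum_congr rfl fun k _ => deriv_const_mul _ (diffAt_t h k j x y t)

end Lemmas

/-- If `φ` solves pKP_K, then `φ_R := φ K` solves the ordinary `m × m` matrix potential
KP equation (pKP with the identity matrix) and `φ_L := K φ` solves the ordinary
`n × n` matrix potential KP equation. -/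
theorem stmt_1 {m n : ℕ} (K : Matrix (Fin n) (Fin m) ℝ)
    (φ : ℝ → ℝ → ℝ → Matrix (Fin m) (Fin n) ℝ)
    (hsmooth : SmoothMat φ) (hφ : pKP K φ) :
    pKP (1 : Matrix (Fin m) (Fin m) ℝ) (fun x y t => φ x y t * K) ∧
      pKP (1 : Matrix (Fin n) (Fin n) ℝ) (fun x y t => K * φ x y t) := by
  have hDx := smooth_Dx hsmooth
  have hDxx := smooth_Dx hDx
  have hDxxx := smooth_Dx hDxx
  have hDy := smooth_Dy hsmooth
  have hDt := smooth_Dt hsmooth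
  have hK := smoothConstMat K
  constructor
  · intro x y t
    have e_x := Dx_mul_const hsmooth K
    have e_y := Dy_mul_const hsmooth K
    have e_t := Dt_mul_const hsmooth K
    have e_xt := Dx_mul_const hDt K
    have e_xx := Dx_mul_const hDx K
    have e_xxx := Dx_mul_const hDxx K
    have e_xxxx := Dx_mul_const hDxxx K
    have e_yy := Dy_mul_const hDy K
    have hnl : SmoothMat fun x y t => Dx φ x y t * K * Dx φ x y t :=
      SmoothMat.mul (SmoothMat.mul hDx hK) hDx
    have e_inner : (fun x y t : ℝ => Dx φ x y t * K * 1 * (Dx φ x y t * K))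
        = fun x y t : ℝ => Dx φ x y t * K * Dx φ x y t * K := by
      funext a b c
      simp [Matrix.mul_one, Matrix.mul_assoc]
    have e_nl := Dx_mul_const hnl K
    have h0 := congrArg (fun M => M * K) (hφ x y t)
    simp only [e_x, e_y, e_t, e_xt, e_xx, e_xxx, e_xxxx, e_yy]
    simp only [e_inner, e_nl]
    simpa only [Matrix.sub_mul, Matrix.add_mul, Matrix.smul_mul, Matrix.zero_mul, Matrix.mul_one, Matrix.mul_assoc] using h0
  · intro x y t
    have e_x := Dx_const_mul hsmooth K
    have e_y := Dy_const_mul hsmooth K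
    have e_t := Dt_const_mul hsmooth K
    have e_xt := Dx_const_mul hDt K
    have e_xx := Dx_const_mul hDx K
    have e_xxx := Dx_const_mul hDxx K
    have e_xxxx := Dx_const_mul hDxxx K
    have e_yy := Dy_const_mul hDy K
    have hnl : SmoothMat fun x y t => Dx φ x y t * K * Dx φ x y t :=
      SmoothMat.mul (SmoothMat.mul hDx hK) hDx
    have e_inner : (fun x y t : ℝ => K * Dx φ x y t * 1 * (K * Dx φ x y t))
        = fun x y t : ℝ => K * (Dx φ x y t * K * Dx φ x y t) := by
      funext a b c
      simp [Matrix.mul_one, Matrix.mul_assoc]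
    have e_nl := Dx_const_mul hnl K
    have h0 := congrArg (fun M => K * M) (hφ x y t)
    simp only [e_x, e_y, e_t, e_xt, e_xx, e_xxx, e_xxxx, e_yy]
    simp only [e_inner, e_nl]
    simpa only [Matrix.mul_sub, Matrix.mul_add, Matrix.mul_smul, Matrix.mul_zero, Matrix.mul_one, Matrix.mul_assoc] using h0
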